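/- arXiv:1504.07545 — 2 statements merged into one kernel-verified Lean document; each statement's English description precedes it below -/
import Mathlib

section
/- Consider the two-population nonatomic congestion game on resources $\{e, f, g\}$ where population 1 has demand $1/2$ and strategies $\{\{e\}, \{f, g\}\}$, population 2 has demand $1/2$ and single strategy $\{f\}$, with cost functions $c_e(t) = 1$, $c_f(t) = t$, $c_g(t) = 3$. In the unique Wardrop equilibrium, population 1 plays $\{e\}$ with private cost $1$ and population 2 has private cost $1/2$. If $c_g$ is reduced to $\bar{c}_g(t) = 0$ (other costs unchanged), then in the unique new Wardrop equilibrium population 1 plays $\{f,g\}$ and population 2's private cost increases to $1$. Hence this family of set systems admits the strong Braess paradox. -/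
/-!  The two-population game on resources `{e, f, g} = {0, 1, 2}` (as `Fin 3`):
population 1 has demand `1/2` and strategies `{{e}, {f,g}}`, population 2 has
demand `1/2` and the single strategy `{f}`.  A strategy distribution is
parametrized by the amount `p ∈ [0, 1/2]` population 1 puts on `{e}`
(the rest, `1/2 - p`, goes on `{f,g}`, and population 2 puts everything
on `{f}`). -/

/-- The load vector induced by the distribution parameter `p`. -/
noncomputable def load (p : ℝ) : Fin 3 → ℝ := ![p, (1 : ℝ) - p, 1/2 - p]

/-- Original cost functions: `c_e = 1`, `c_f(t) = t`, `c_g = 3`. -/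
noncomputable def cOrig : Fin 3 → ℝ → ℝ := ![fun _ => 1, fun t => t, fun _ => 3]

/-- Reduced cost functions: `c_g` lowered from `3` to `0`. -/
noncomputable def cNew : Fin 3 → ℝ → ℝ := ![fun _ => 1, fun t => t, fun _ => 0]

/-- Wardrop equilibrium: every strategy carrying positive mass has minimal cost. -/
noncomputable def isWardrop (c : Fin 3 → ℝ → ℝ) (p : ℝ) : Prop :=
  0 ≤ p ∧ p ≤ 1/2 ∧
  (0 < p → c 0 (load p 0) ≤ c 1 (load p 1) + c 2 (load p 2)) ∧
  (p < 1/2 → c 1 (load p 1) + c 2 (load p 2) ≤ c 0 (load p 0))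

/-! Before the reduction the detour `{f, g}` costs `(1 - p) + 3 > 1`, so population 1 stays
on `{e}`; after it the detour costs `1 - p`, which undercuts `{e}` as soon as `{e}` carries
mass, so population 1 moves onto `f` and doubles the load that population 2 pays. -/

section Evaluation

variable (p t : ℝ)

@[simp] lemma load_zero : load p 0 = p := rfl
@[simp] lemma load_one : load p 1 = 1 - p := rfl
@[simp] lemma load_two : load p 2 = 1/2 - p := rfl

@[simp] lemma cOrig_zero : cOrig 0 t = 1 := rfl
@[simp] lemma cOrig_one : cOrig 1 t = t := rfl
@[simp] lemma cOrig_two : cOrig 2 t = 3 := rfl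

@[simp] lemma cNew_zero : cNew 0 t = 1 := rfl
@[simp] lemma cNew_one : cNew 1 t = t := rfl
@[simp] lemma cNew_two : cNew 2 t = 0 := rfl

end Evaluation

section Uniqueness

variable {c : Fin 3 → ℝ → ℝ}

lemma isWardrop_iff_eq_half_of_detour_costlier
    (hlt : ∀ p, 0 ≤ p → p ≤ 1/2 → c 0 (load p 0) < c 1 (load p 1) + c 2 (load p 2))
    (p : ℝ) : isWardrop c p ↔ p = 1/2 := by
  constructor
  · rintro ⟨hp0, hp1, -, hdetour⟩
    by_contra hne
    have := hdetour (lt_of_le_of_ne hp1 hne)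
    linarith [hlt p hp0 hp1]
  · rintro rfl
    exact ⟨by norm_num, le_rfl, fun _ => (hlt _ (by norm_num) le_rfl).le,
      fun h => absurd h (lt_irrefl _)⟩

lemma isWardrop_iff_eq_zero_of_detour_cheaper
    (hlt : ∀ p, 0 < p → p ≤ 1/2 → c 1 (load p 1) + c 2 (load p 2) < c 0 (load p 0))
    (hle : c 1 (load 0 1) + c 2 (load 0 2) ≤ c 0 (load 0 0))
    (p : ℝ) : isWardrop c p ↔ p = 0 := by
  constructor
  · rintro ⟨hp0, hp1, hdirect, -⟩
    by_contra hne
    have hpos := lt_of_le_of_ne hp0 (Ne.symm hne)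
    linarith [hdirect hpos, hlt p hpos hp1]
  · rintro rfl
    exact ⟨le_rfl, by norm_num, fun h => absurd h (lt_irrefl _), fun _ => hle⟩

end Uniqueness

lemma isWardrop_cOrig_iff (p : ℝ) : isWardrop cOrig p ↔ p = 1/2 :=
  isWardrop_iff_eq_half_of_detour_costlier (fun q _ hq => by
    simp only [cOrig_zero, cOrig_one, cOrig_two, load_one]
    linarith) p

lemma isWardrop_cNew_iff (p : ℝ) : isWardrop cNew p ↔ p = 0 :=
  isWardrop_iff_eq_zero_of_detour_cheaper (fun q hq _ => by
    simp only [cNew_zero, cNew_one, cNew_two, load_one]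
    linarith) (by norm_num) p

theorem stmt18 :
    (∀ p : ℝ, isWardrop cOrig p ↔ p = 1/2) ∧
    (∀ p : ℝ, isWardrop cNew p ↔ p = 0) ∧
    cOrig 0 (load (1/2) 0) = 1 ∧
    cOrig 1 (load (1/2) 1) = 1/2 ∧
    cNew 1 (load 0 1) = 1 ∧
    cOrig 1 (load (1/2) 1) < cNew 1 (load 0 1) := by
  refine ⟨isWardrop_cOrig_iff, isWardrop_cNew_iff, ?_⟩
  norm_num
end

section
/- Let $(E, \mathcal{S}_i)_{i \in N}$ be set systems and $(E, (\mathcal{S}_i)^{\min})_{i \in N}$ their clutters of inclusionwise minimal sets. For any nonatomic congestion model $\mathcal{M}$ with strategy spaces $(\mathcal{S}_i)$ and continuous nondecreasing costs, every Wardrop equilibrium load vector $x$ of $\mathcal{M}$ satisfies: there is a Wardrop equilibrium load vector $x'$ of the model $\mathcal{M}^{\min}$ (same data but strategy spaces $(\mathcal{S}_i)^{\min}$) with $c_e(x'_e) = c_e(x_e)$ for all $e \in E$. Consequently, if the clutters $(E,(\mathcal{S}_i)^{\min})_{i\in N}$ are immune to the weak Braess paradox, then so are $(E, \mathcal{S}_i)_{i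 \in N}$. -/
open Finset MeasureTheory

/-- The Beckmann potential. -/
noncomputable def beckmann {E : Type*} [Fintype E] (c : E → ℝ → ℝ) (x : E → ℝ) : ℝ :=
  ∑ e, ∫ t in (0:ℝ)..(x e), c e t

/-- Admissible cost functions: nonnegative, continuous and nondecreasing on `[0,∞)`. -/
def CostAdmissible {E : Type*} (c : E → ℝ → ℝ) : Prop :=
  ∀ e, ContinuousOn (c e) (Set.Ici 0) ∧ MonotoneOn (c e) (Set.Ici 0) ∧
    ∀ t ∈ Set.Ici (0:ℝ), 0 ≤ c e t

/-- The set of load vectors obtainable by feasible strategy distributions of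
populations `i ∈ N` with strategy spaces `S i` and demands `d i`. -/
def loadPolytope {E N : Type*} [Fintype E] [Fintype N] [DecidableEq E]
    (S : N → Finset (Finset E)) (d : N → ℝ) : Set (E → ℝ) :=
  {x | ∃ w : N → Finset E → ℝ,
    (∀ i B, 0 ≤ w i B) ∧ (∀ i B, w i B ≠ 0 → B ∈ S i) ∧
    (∀ i, ∑ B : Finset E, w i B = d i) ∧
    (∀ e, x e = ∑ i : N, ∑ B : Finset E, (if e ∈ B then w i B else 0))}

/-- Wardrop equilibrium load vectors = minimizers of the Beckmann potential over
the feasible load polytope. -/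
def IsEqLoad {E N : Type*} [Fintype E] [Fintype N] [DecidableEq E]
    (c : E → ℝ → ℝ) (S : N → Finset (Finset E)) (d : N → ℝ) (x : E → ℝ) : Prop :=
  x ∈ loadPolytope S d ∧ ∀ y ∈ loadPolytope S d, beckmann c x ≤ beckmann c y

/-- The clutter of inclusionwise minimal members of a set system. -/
def minClutter {E : Type*} [DecidableEq E] (F : Finset (Finset E)) : Finset (Finset E) :=
  F.filter (fun U => ∀ T ∈ F, T ⊆ U → T = U)

/-- Immunity to the weak Braess paradox for the family of strategy spaces `S`. -/
def ImmuneWeakBP {E N : Type*} [Fintype E] [Fintype N] [DecidableEq E]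
    (S : N → Finset (Finset E)) : Prop :=
  ∀ (c cbar : E → ℝ → ℝ) (d dbar : N → ℝ),
    CostAdmissible c → CostAdmissible cbar →
    (∀ e, ∀ t ∈ Set.Ici (0:ℝ), cbar e t ≤ c e t) →
    (∀ i, 0 ≤ dbar i) → (∀ i, dbar i ≤ d i) →
    ∀ x xbar, IsEqLoad c S d x → IsEqLoad cbar S dbar xbar →
      ∀ e, cbar e (xbar e) ≤ c e (x e)

/-! ### Auxiliary lemmas -/

lemma mem_minClutter_iff {E : Type*} [DecidableEq E] {F : Finset (Finset E)} {B : Finset E} :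
    B ∈ minClutter F ↔ B ∈ F ∧ ∀ T ∈ F, T ⊆ B → T = B :=
  Finset.mem_filter

lemma minClutter_subset {E : Type*} [DecidableEq E] (F : Finset (Finset E)) :
    minClutter F ⊆ F :=
  Finset.filter_subset _ _

lemma exists_minClutter_subset {E : Type*} [DecidableEq E] {F : Finset (Finset E)} :
    ∀ B, B ∈ F → ∃ T, T ∈ minClutter F ∧ T ⊆ B := by
  intro B
  induction B using Finset.strongInduction with
  | _ B ih =>
    intro hB
    by_cases h : ∀ T ∈ F, T ⊆ B → T = B
    · exact ⟨B, mem_minClutter_iff.2 ⟨hB, h⟩, subset_rfl⟩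
    · push_neg at h
      obtain ⟨T, hTF, hTB, hne⟩ := h
      obtain ⟨U, hU, hUT⟩ := ih T (Finset.ssubset_iff_subset_ne.2 ⟨hTB, hne⟩) hTF
      exact ⟨U, hU, hUT.trans hTB⟩

lemma load_nonneg {E N : Type*} [Fintype E] [Fintype N] [DecidableEq E]
    {S : N → Finset (Finset E)} {d : N → ℝ} {x : E → ℝ}
    (hx : x ∈ loadPolytope S d) (e : E) : 0 ≤ x e := by
  obtain ⟨w, hw0, -, -, hwx⟩ := hx
  rw [hwx e]
  refine Finset.sum_nonneg fun i _ => Finset.sum_nonneg fun B _ => ?_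
  split_ifs
  · exact hw0 i B
  · exact le_refl 0

lemma loadPolytope_min_subset {E N : Type*} [Fintype E] [Fintype N] [DecidableEq E]
    (S : N → Finset (Finset E)) (d : N → ℝ) :
    loadPolytope (fun i => minClutter (S i)) d ⊆ loadPolytope S d := by
  rintro x ⟨w, hw0, hwS, hwd, hwx⟩
  refine ⟨w, hw0, fun i B h => ?_, hwd, hwx⟩
  exact minClutter_subset _ (hwS i B h)

lemma exists_proj {E N : Type*} [Fintype E] [Fintype N] [DecidableEq E]
    {S : N → Finset (Finset E)} {d : N → ℝ} {x : E → ℝ}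
    (hx : x ∈ loadPolytope S d) :
    ∃ y ∈ loadPolytope (fun i => minClutter (S i)) d, ∀ e, y e ≤ x e := by
  classical
  obtain ⟨w, hw0, hwS, hwd, hwx⟩ := hx
  have hch : ∀ (i : N) (B : Finset E), B ∈ S i → ∃ T, T ∈ minClutter (S i) ∧ T ⊆ B :=
    fun i B hB => exists_minClutter_subset B hB
  choose! μ hμmem hμsub using hch
  set w' : N → Finset E → ℝ :=
    fun i T => ∑ B ∈ Finset.univ.filter (fun B => μ i B = T), w i B with hw'
  refine ⟨fun e => ∑ i : N, ∑ T : Finset E, (if e ∈ T then w' i T else 0), ⟨w', ?_, ?_, ?_, fun e => rfl⟩, ?_⟩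
  · intro i T
    exact Finset.sum_nonneg fun B _ => hw0 i B
  · intro i T hT
    obtain ⟨B, hBmem, hBne⟩ := Finset.exists_ne_zero_of_sum_ne_zero hT
    have hBS : B ∈ S i := hwS i B hBne
    have := (Finset.mem_filter.1 hBmem).2
    rw [← this]
    exact hμmem i B hBS
  · intro i
    rw [← hwd i]
    exact Finset.sum_fiberwise _ _ _
  · intro e
    rw [hwx e]
    refine Finset.sum_le_sum fun i _ => ?_
    have hfib : ∀ T : Finset E, (if e ∈ T then w' i T else 0)
        = ∑ B ∈ Finset.univ.filter (fun B => μ i B = T), (if e ∈ μ i B then w i B else 0) := by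
      intro T
      rw [hw']
      split_ifs with h
      · rw [Finset.sum_ite_of_true]
        intro B hB
        rw [(Finset.mem_filter.1 hB).2]
        exact h
      · symm
        refine Finset.sum_eq_zero fun B hB => ?_
        rw [(Finset.mem_filter.1 hB).2, if_neg h]
    calc ∑ T : Finset E, (if e ∈ T then w' i T else 0)
        = ∑ T : Finset E, ∑ B ∈ Finset.univ.filter (fun B => μ i B = T),
            (if e ∈ μ i B then w i B else 0) := Finset.sum_congr rfl fun T _ => hfib T
      _ = ∑ B : Finset E, (if e ∈ μ i B then w i B else 0) := Finset.sum_fiberwise _ _ _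
      _ ≤ ∑ B : Finset E, (if e ∈ B then w i B else 0) := by
          refine Finset.sum_le_sum fun B _ => ?_
          by_cases hwB : w i B = 0
          · simp [hwB]
          · have hsub : μ i B ⊆ B := hμsub i B (hwS i B hwB)
            split_ifs with h1 h2
            · exact le_refl _
            · exact absurd (hsub h1) h2
            · exact hw0 i B
            · exact le_refl 0

lemma costInt {E : Type*} {c : E → ℝ → ℝ} (hc : CostAdmissible c) (e : E)
    {a b : ℝ} (ha : 0 ≤ a) (hb : 0 ≤ b) :
    IntervalIntegrable (c e) volume a b := by
  exact ((hc e).1.mono (Set.ordConnected_Ici.uIcc_subset ha hb)).intervalIntegrable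

lemma beckmann_term_mono {E : Type*} [Fintype E] {c : E → ℝ → ℝ} (hc : CostAdmissible c)
    {x y : E → ℝ} (hy0 : ∀ e, 0 ≤ y e) (hyx : ∀ e, y e ≤ x e) (e : E) :
    (∫ t in (0:ℝ)..(y e), c e t) ≤ ∫ t in (0:ℝ)..(x e), c e t := by
  have hx0 : 0 ≤ x e := (hy0 e).trans (hyx e)
  have h1 : IntervalIntegrable (c e) volume 0 (y e) := costInt hc e le_rfl (hy0 e)
  have h2 : IntervalIntegrable (c e) volume (y e) (x e) := costInt hc e (hy0 e) hx0
  have hadd := intervalIntegral.integral_add_adjacent_intervals h1 h2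
  have hnn : 0 ≤ ∫ t in (y e)..(x e), c e t :=
    intervalIntegral.integral_nonneg (hyx e) (fun u hu => (hc e).2.2 u ((hy0 e).trans hu.1))
  linarith

lemma cost_const_of_integral_zero {f : ℝ → ℝ} (hcont : ContinuousOn f (Set.Ici 0))
    (hmono : MonotoneOn f (Set.Ici 0)) (hnn : ∀ t ∈ Set.Ici (0:ℝ), 0 ≤ f t)
    {a b : ℝ} (ha : 0 ≤ a) (hab : a ≤ b)
    (hint : (∫ t in a..b, f t) = 0) : f b = f a := by
  rcases eq_or_lt_of_le hab with h | h
  · rw [h]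
  have hb : 0 ≤ b := ha.trans hab
  have hII : ∀ s t : ℝ, 0 ≤ s → 0 ≤ t → IntervalIntegrable f volume s t := fun s t hs ht =>
    ((hcont.mono (Set.ordConnected_Ici.uIcc_subset hs ht)).intervalIntegrable)
  have hzero : ∀ t ∈ Set.Ico a b, f t = 0 := by
    intro t ht
    have ht0 : 0 ≤ t := ha.trans ht.1
    have hsplit := intervalIntegral.integral_add_adjacent_intervals
      (hII a t ha ht0) (hII t b ht0 hb)
    have hq1 : 0 ≤ ∫ s in a..t, f s :=
      intervalIntegral.integral_nonneg ht.1 (fun u hu => hnn u (ha.trans hu.1))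
    have hq2 : (b - t) * f t ≤ ∫ s in t..b, f s := by
      have hmm := intervalIntegral.integral_mono_on (f := fun _ => f t) (g := f)
        ht.2.le intervalIntegrable_const (hII t b ht0 hb)
        (fun u hu => hmono ht0 (ht0.trans hu.1) hu.1)
      simpa [smul_eq_mul] using hmm
    have hfnn : 0 ≤ f t := hnn t ht0
    have hbt : 0 < b - t := sub_pos.mpr ht.2
    nlinarith
  have hfa : f a = 0 := hzero a ⟨le_rfl, h⟩
  have hsub : Set.Ioo a b ⊆ Set.Ici (0:ℝ) := fun t ht => ha.trans ht.1.le
  have ht1 : Filter.Tendsto f (nhdsWithin b (Set.Ioo a b)) (nhds (f b)) :=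
    ((hcont b hb).tendsto).mono_left (nhdsWithin_mono b hsub)
  have ht2 : Filter.Tendsto f (nhdsWithin b (Set.Ioo a b)) (nhds 0) := by
    refine Filter.Tendsto.congr' ?_ (tendsto_const_nhds (α := ℝ) (x := (0:ℝ)))
    filter_upwards [self_mem_nhdsWithin] with t ht
    exact (hzero t ⟨ht.1.le, ht.2⟩).symm
  haveI := right_nhdsWithin_Ioo_neBot h
  rw [tendsto_nhds_unique ht1 ht2, hfa]

theorem stmt19 {E N : Type*} [Fintype E] [Fintype N] [DecidableEq E]
    (S : N → Finset (Finset E)) (hS : ∀ i, (S i).Nonempty) :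
    (∀ (c : E → ℝ → ℝ) (d : N → ℝ), CostAdmissible c → (∀ i, 0 ≤ d i) →
      ∀ x, IsEqLoad c S d x →
        ∃ x', IsEqLoad c (fun i => minClutter (S i)) d x' ∧
          ∀ e, c e (x' e) = c e (x e)) ∧
    (ImmuneWeakBP (fun i => minClutter (S i)) → ImmuneWeakBP S) := by
  classical
  have key : ∀ (c : E → ℝ → ℝ) (d : N → ℝ), CostAdmissible c → (∀ i, 0 ≤ d i) →
      ∀ x, IsEqLoad c S d x →
        ∃ x', IsEqLoad c (fun i => minClutter (S i)) d x' ∧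
          ∀ e, c e (x' e) = c e (x e) := by
    intro c d hc hd x hx
    obtain ⟨hxmem, hxmin⟩ := hx
    obtain ⟨y, hymem, hyle⟩ := exists_proj hxmem
    have hy0 : ∀ e, 0 ≤ y e := fun e => load_nonneg hymem e
    have hyfull : y ∈ loadPolytope S d := loadPolytope_min_subset S d hymem
    have termle : ∀ e ∈ (Finset.univ : Finset E),
        (∫ t in (0:ℝ)..(y e), c e t) ≤ ∫ t in (0:ℝ)..(x e), c e t :=
      fun e _ => beckmann_term_mono hc hy0 hyle e
    have h2 : beckmann c y ≤ beckmann c x := Finset.sum_le_sum termle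
    have h1 : beckmann c x ≤ beckmann c y := hxmin y hyfull
    have heq : beckmann c y = beckmann c x := le_antisymm h2 h1
    have hterm := (Finset.sum_eq_sum_iff_of_le termle).1 heq
    refine ⟨y, ⟨hymem, fun z hz => ?_⟩, fun e => ?_⟩
    · rw [heq]
      exact hxmin z (loadPolytope_min_subset S d hz)
    · have hx0 : 0 ≤ x e := (hy0 e).trans (hyle e)
      have hzero : (∫ t in (y e)..(x e), c e t) = 0 := by
        have hadd := intervalIntegral.integral_add_adjacent_intervals
          (costInt hc e le_rfl (hy0 e)) (costInt hc e (hy0 e) hx0)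
        have := hterm e (Finset.mem_univ e)
        linarith
      exact (cost_const_of_integral_zero (hc e).1 (hc e).2.1 (hc e).2.2
        (hy0 e) (hyle e) hzero).symm
  refine ⟨key, fun himm c cbar d dbar hc hcbar hle hdbar0 hdd x xbar hx hxbar e => ?_⟩
  have hd0 : ∀ i, 0 ≤ d i := fun i => (hdbar0 i).trans (hdd i)
  obtain ⟨x', hx', hcx'⟩ := key c d hc hd0 x hx
  obtain ⟨xbar', hxbar', hcxbar'⟩ := key cbar dbar hcbar hdbar0 xbar hxbar
  rw [← hcx' e, ← hcxbar' e]
  exact himm c cbar d dbar hc hcbar hle hdbar0 hdd x' xbar' hx' hxbar' e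
end
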